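/- Let N be a connected network whose degree-1 nodes are bijectively labeled by a set X, and let M be a connected subnetwork of N, with the restricted labeling of some of its degree-1 nodes by a subset Y ⊆ X. If a set S ⊆ Y with |S| ≥ 3 determines a blob B₀ of M, then S determines a blob B of N (namely the blob of N containing B₀); moreover, for each s ∈ S, the cut edge of N incident to B through which the path from B to s passes is an edge of M. -/

import Mathlib

/-!
# Common framework

Finite directed multigraphs, undirected connectivity, numbers of connected
components, cut edges, subgraphs, blobs, blobs determined by leaf sets,
B-quartets, and quartets displayed via cut-edge separation.

A *network* is modelled as a finite directed multigraph (edge directions are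
simply ignored for the undirected notions of connectivity, cut edges and
blobs).
-/

/-- A finite directed multigraph: finite types of nodes and of edges, with
source and target maps. -/
structure MDigraph where
  V : Type
  E : Type
  finV : Finite V
  finE : Finite E
  src : E → V
  tgt : E → V

attribute [instance] MDigraph.finV MDigraph.finE

namespace MDigraph

section Basic

variable (G : MDigraph)

/-- One undirected step between `u` and `v` along an edge from the set `F`. -/
def Step (F : Set G.E) (u v : G.V) : Prop :=
  ∃ e ∈ F, (G.src e = u ∧ G.tgt e = v) ∨ (G.src e = v ∧ G.tgt e = u)

/-- Undirected reachability (an undirected path) using only edges in `F`. -/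
def Conn (F : Set G.E) (u v : G.V) : Prop :=
  Relation.ReflTransGen (G.Step F) u v

/-- One directed step from `u` to `v` along an edge from the set `F`. -/
def DStep (F : Set G.E) (u v : G.V) : Prop :=
  ∃ e ∈ F, G.src e = u ∧ G.tgt e = v

/-- Directed reachability (a directed path) using only edges in `F`. -/
def DConn (F : Set G.E) (u v : G.V) : Prop :=
  Relation.ReflTransGen (G.DStep F) u v

/-- `u` is above (ancestral to) `v`: there is a directed path from `u` to `v`. -/
def Above (u v : G.V) : Prop := G.DConn Set.univ u v

/-- In-degree of a node. -/
noncomputable def inDeg (v : G.V) : ℕ := Nat.card {e : G.E // G.tgt e = v}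

/-- Out-degree of a node. -/
noncomputable def outDeg (v : G.V) : ℕ := Nat.card {e : G.E // G.src e = v}

/-- Undirected degree of a node (a loop counts twice). -/
noncomputable def degree (v : G.V) : ℕ := G.inDeg v + G.outDeg v

/-- The number of connected components of the graph with node set `W` and edge
set the restriction to `W` of `F` (two nodes of `W` lie in the same connected
component iff they are joined by an undirected path). -/
noncomputable def numComponents (W : Set G.V) (F : Set G.E) : ℕ :=
  Nat.card (Quot (fun u v : W => G.Step {e ∈ F | G.src e ∈ W ∧ G.tgt e ∈ W} u.1 v.1))

/-- `v` lies on every directed path from `u` to `w`: there is no directed path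
from `u` to `w` all of whose nodes avoid `v`. -/
def OnEveryPath (v u w : G.V) : Prop :=
  ¬ (u ≠ v ∧ w ≠ v ∧
      Relation.ReflTransGen (fun a b => G.DStep Set.univ a b ∧ a ≠ v ∧ b ≠ v) u w)

end Basic

/-- A subgraph (subnetwork): a set of nodes together with a set of edges
joining them. -/
structure Subgraph (G : MDigraph) where
  verts : Set G.V
  edges : Set G.E
  src_mem : ∀ e ∈ edges, G.src e ∈ verts
  tgt_mem : ∀ e ∈ edges, G.tgt e ∈ verts

/-- The whole graph, as a subgraph of itself. -/
def top (G : MDigraph) : Subgraph G :=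
  ⟨Set.univ, Set.univ, fun _ _ => Set.mem_univ _, fun _ _ => Set.mem_univ _⟩

namespace Subgraph

variable {G : MDigraph}

/-- Containment of subgraphs. -/
def le (H K : Subgraph G) : Prop := H.verts ⊆ K.verts ∧ H.edges ⊆ K.edges

/-- The subgraph `H` is connected. -/
def IsConnected (H : Subgraph G) : Prop :=
  H.verts.Nonempty ∧ ∀ u ∈ H.verts, ∀ v ∈ H.verts, G.Conn H.edges u v

/-- Delete an edge from a subgraph. -/
def deleteEdge (H : Subgraph G) (e : G.E) : Subgraph G :=
  ⟨H.verts, H.edges \ {e}, fun e' he' => H.src_mem e' he'.1,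
    fun e' he' => H.tgt_mem e' he'.1⟩

/-- The number of connected components of a subgraph. -/
noncomputable def numComponents (H : Subgraph G) : ℕ :=
  G.numComponents H.verts H.edges

/-- `e` is a cut edge of the (sub)graph `H`: deleting it increases the number
of connected components. -/
def IsCutEdge (H : Subgraph G) (e : G.E) : Prop :=
  e ∈ H.edges ∧ H.numComponents < (H.deleteEdge e).numComponents

end Subgraph

variable {G : MDigraph}

/-- `B` is a blob of the network `H`: a maximal connected subnetwork of `H`
having no cut edges.  (A blob is *trivial* if it consists of a single node.) -/
def IsBlobIn (H B : Subgraph G) : Prop :=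
  B.le H ∧ B.IsConnected ∧ (∀ e, ¬ B.IsCutEdge e) ∧
    ∀ B' : Subgraph G, B'.le H → B'.IsConnected → (∀ e, ¬ B'.IsCutEdge e) →
      B.le B' → B'.le B

/-- `e` is a cut edge of the network `H` incident to the blob `B`: exactly one
of its endpoints is a node of `B`. -/
def IncidentCut (H B : Subgraph G) (e : G.E) : Prop :=
  H.IsCutEdge e ∧ Xor' (G.src e ∈ B.verts) (G.tgt e ∈ B.verts)

/-- The blob `B` of the network `H` is determined by the set `S` of leaf
labels: deletion of the cut edges of `H` incident to `B` leaves the nodes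
labelled by the elements of `S` in distinct connected components. -/
def DeterminesIn {X : Type} (H B : Subgraph G) (leaf : X → G.V) (S : Set X) : Prop :=
  ∀ s ∈ S, ∀ t ∈ S, s ≠ t →
    ¬ G.Conn {e ∈ H.edges | ¬ IncidentCut H B e} (leaf s) (leaf t)

/-- Four taxa form a B-quartet on the network `H`: some blob of `H` is
determined by them. -/
def BQuartetIn {X : Type} (H : Subgraph G) (leaf : X → G.V) (a b c d : X) : Prop :=
  ∃ B : Subgraph G, IsBlobIn H B ∧ DeterminesIn H B leaf ({a, b, c, d} : Set X)

/-- Some cut edge of `H` separates the taxa `p, q` from the taxa `r, s`: after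
its deletion `p, q` lie in one connected component and `r, s` in another.  For
a 4-taxon set `{p,q,r,s}` this says exactly that the (reduced unrooted) tree of
blobs of `H` displays the resolved quartet `pq|rs` (the edges of the tree of
blobs correspond exactly to the cut edges of the network, and suppressing
degree-2 nodes or contracting blobs does not affect which taxa a cut edge
separates). -/
def CutSep {X : Type} (H : Subgraph G) (leaf : X → G.V) (p q r s : X) : Prop :=
  ∃ e, H.IsCutEdge e ∧
    G.Conn (H.edges \ {e}) (leaf p) (leaf q) ∧
    G.Conn (H.edges \ {e}) (leaf r) (leaf s) ∧
    ¬ G.Conn (H.edges \ {e}) (leaf p) (leaf r)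

end MDigraph

open MDigraph

/-!
Let `B` be the blob of `N` containing `B₀`. No leaf of `S` lies in `B`: a bridgeless connected
subgraph containing a leaf is that single node, and a single leaf cannot be a blob of `M`
determined by three labels, since deleting its pendant edge keeps the other leaves connected.

A walk in `M` from the leaf of `s` into `B₀ ⊆ B` enters `B` through an edge `f_s` with one
endpoint in `B`; it is a cut edge of `N`, because a non-cut edge at a blob lies on a cycle
that the blob absorbs by maximality. Before `f_s` the walk stays outside `B`, so it avoids the
cut edges incident to `B` in `N` and those incident to `B₀` in `M`. Two cut edges incident to
`B` whose outer endpoints are joined off such edges coincide, so `f_s` is the only incident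
cut edge on the side of `s`: it is an edge of `M`, and if the leaves of `s ≠ t` were joined in
`N` off the incident cut edges, then `f_s = f_t`, and the leaves would be joined in `M` through
the common outer endpoint, contradicting that `S` determines `B₀`.
-/

lemma Function.Surjective.nat_card_lt_iff_not_injective {α β : Type*} [Finite α] {f : α → β}
    (hf : f.Surjective) : Nat.card β < Nat.card α ↔ ¬ f.Injective := by
  classical
  have := Fintype.ofFinite α
  have := Fintype.ofSurjective f hf
  refine ⟨fun hlt hinj => hlt.ne (Nat.card_eq_of_bijective f ⟨hinj, hf⟩).symm, fun h => ?_⟩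
  rw [Nat.card_eq_fintype_card, Nat.card_eq_fintype_card]
  exact Fintype.card_lt_of_surjective_not_injective f hf h

namespace MDigraph

variable {G : MDigraph}

def ends (G : MDigraph) (e : G.E) : Set G.V := {G.src e, G.tgt e}

@[simp]
lemma mem_ends {e : G.E} {v : G.V} : v ∈ G.ends e ↔ v = G.src e ∨ v = G.tgt e := Iff.rfl

lemma src_mem_ends (e : G.E) : G.src e ∈ G.ends e := Or.inl rfl

lemma tgt_mem_ends (e : G.E) : G.tgt e ∈ G.ends e := Or.inr rfl

section Conn

variable {F F' : Set G.E} {u v w : G.V}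

lemma Step.symm (h : G.Step F u v) : G.Step F v u := by
  obtain ⟨e, he, h⟩ := h
  exact ⟨e, he, h.symm⟩

lemma Step.mono (hF : F ⊆ F') (h : G.Step F u v) : G.Step F' u v := by
  obtain ⟨e, he, h⟩ := h
  exact ⟨e, hF he, h⟩

instance : Std.Symm (G.Step F) := ⟨fun _ _ => Step.symm⟩

lemma Conn.refl (u : G.V) : G.Conn F u u := Relation.ReflTransGen.refl

lemma Conn.single (h : G.Step F u v) : G.Conn F u v := Relation.ReflTransGen.single h

lemma Conn.trans (h : G.Conn F u v) (h' : G.Conn F v w) : G.Conn F u w :=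
  Relation.ReflTransGen.trans h h'

lemma Conn.symm (h : G.Conn F u v) : G.Conn F v u :=
  symm_of (Relation.ReflTransGen (G.Step F)) h

lemma Conn.mono (hF : F ⊆ F') (h : G.Conn F u v) : G.Conn F' u v :=
  Relation.ReflTransGen.mono (fun _ _ => Step.mono hF) _ _ h

lemma Conn.of_mem_ends {e : G.E} (he : G.Conn F (G.src e) (G.tgt e))
    (hu : u ∈ G.ends e) (hv : v ∈ G.ends e) : G.Conn F u v := by
  rcases hu with rfl | rfl <;> rcases hv with rfl | rfl
  exacts [.refl _, he, he.symm, .refl _]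

lemma Conn.src_tgt_of_mem_ends {e : G.E} (h : G.Conn F u v) (hu : u ∈ G.ends e)
    (hv : v ∈ G.ends e) (huv : u ≠ v) : G.Conn F (G.src e) (G.tgt e) := by
  rcases hu with rfl | rfl <;> rcases hv with rfl | rfl
  exacts [absurd rfl huv, h, h.symm, absurd rfl huv]

lemma conn_of_mem_ends {e : G.E} (he : e ∈ F) (hu : u ∈ G.ends e) (hv : v ∈ G.ends e) :
    G.Conn F u v :=
  .of_mem_ends (.single ⟨e, he, Or.inl ⟨rfl, rfl⟩⟩) hu hv

lemma Conn.diff_singleton_or (f : G.E) (h : G.Conn F u v) :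
    G.Conn (F \ {f}) u v ∨ ∃ c₁ ∈ G.ends f, ∃ c₂ ∈ G.ends f,
      G.Conn (F \ {f}) u c₁ ∧ G.Conn (F \ {f}) c₂ v := by
  induction h using Relation.ReflTransGen.head_induction_on with
  | refl => exact Or.inl (.refl _)
  | @head x y hxy _ ih =>
    obtain ⟨g, hgF, hg⟩ := hxy
    by_cases hgf : g = f
    · subst hgf
      have hx : x ∈ G.ends g := by rcases hg with ⟨rfl, -⟩ | ⟨-, rfl⟩ <;> simp
      have hy : y ∈ G.ends g := by rcases hg with ⟨-, rfl⟩ | ⟨rfl, -⟩ <;> simp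
      rcases ih with h | ⟨-, -, c₂, hc₂, -, h⟩
      exacts [Or.inr ⟨x, hx, y, hy, .refl _, h⟩, Or.inr ⟨x, hx, c₂, hc₂, .refl _, h⟩]
    · have hxy : G.Conn (F \ {f}) x y := .single ⟨g, ⟨hgF, hgf⟩, hg⟩
      rcases ih with h | ⟨c₁, hc₁, c₂, hc₂, h₁, h₂⟩
      exacts [Or.inl (hxy.trans h), Or.inr ⟨c₁, hc₁, c₂, hc₂, hxy.trans h₁, h₂⟩]

lemma Conn.diff_singleton {e : G.E} (he : G.Conn (F \ {e}) (G.src e) (G.tgt e))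
    (h : G.Conn F u v) : G.Conn (F \ {e}) u v := by
  rcases h.diff_singleton_or e with h | ⟨c₁, hc₁, c₂, hc₂, h₁, h₂⟩
  exacts [h, h₁.trans ((Conn.of_mem_ends he hc₁ hc₂).trans h₂)]

lemma Conn.exists_crossing {W : Set G.V} (h : G.Conn F u v) (hu : u ∉ W) (hv : v ∈ W) :
    ∃ f ∈ F, Xor (G.src f ∈ W) (G.tgt f ∈ W) ∧ ∃ w ∈ G.ends f, w ∉ W ∧
      G.Conn {g ∈ F | G.src g ∉ W ∧ G.tgt g ∉ W} u w := by
  induction h using Relation.ReflTransGen.head_induction_on with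
  | refl => exact absurd hv hu
  | @head x y hxy _ ih =>
    obtain ⟨g, hgF, hg⟩ := hxy
    by_cases hy : y ∈ W
    · refine ⟨g, hgF, ?_, x, ?_, hu, .refl _⟩ <;>
        rcases hg with ⟨rfl, rfl⟩ | ⟨rfl, rfl⟩ <;> simp [Xor, hu, hy]
    · obtain ⟨f, hfF, hf, w, hw, hwW, hyw⟩ := ih hy
      have hg' : g ∈ {g ∈ F | G.src g ∉ W ∧ G.tgt g ∉ W} := by
        rcases hg with ⟨rfl, rfl⟩ | ⟨rfl, rfl⟩ <;> exact ⟨hgF, by tauto, by tauto⟩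
      exact ⟨f, hfF, hf, w, hw, hwW, (Conn.single ⟨g, hg', hg⟩).trans hyw⟩

end Conn

section CutEdge

variable {F : Set G.E}

lemma quot_mk_eq_iff_conn {W : Set G.V} (hF : ∀ e ∈ F, G.src e ∈ W ∧ G.tgt e ∈ W)
    (u v : W) :
    Quot.mk (fun a b : W => G.Step F a b) u = Quot.mk _ v ↔ G.Conn F u v := by
  have : Std.Symm (fun a b : W => G.Step F a b) := ⟨fun _ _ => Step.symm⟩
  rw [Quot.eq, Relation.EqvGen.eqvGen_eq_reflTransGen]
  refine ⟨fun h => h.lift Subtype.val fun _ _ => id, fun h => ?_⟩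
  obtain ⟨u, hu⟩ := u
  simp only at h
  induction h using Relation.ReflTransGen.head_induction_on with
  | refl => exact .refl
  | @head x y hxy _ ih =>
    have hy : y ∈ W := by
      obtain ⟨e, he, hxy⟩ := hxy
      rcases hxy with ⟨-, rfl⟩ | ⟨rfl, -⟩
      exacts [(hF e he).2, (hF e he).1]
    exact .head (b := ⟨y, hy⟩) hxy (ih hy)

lemma Subgraph.numComponents_eq_card (H : Subgraph G) :
    H.numComponents = Nat.card (Quot fun u v : H.verts => G.Step H.edges u v) := by
  have : {e ∈ H.edges | G.src e ∈ H.verts ∧ G.tgt e ∈ H.verts} = H.edges :=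
    Set.sep_eq_self_iff_mem_true.2 fun e he => ⟨H.src_mem e he, H.tgt_mem e he⟩
  rw [Subgraph.numComponents, MDigraph.numComponents, this]

theorem Subgraph.isCutEdge_iff {H : Subgraph G} {e : G.E} :
    H.IsCutEdge e ↔ e ∈ H.edges ∧ ¬ G.Conn (H.edges \ {e}) (G.src e) (G.tgt e) := by
  refine and_congr_right fun he => ?_
  have hH : ∀ f ∈ H.edges, G.src f ∈ H.verts ∧ G.tgt f ∈ H.verts :=
    fun f hf => ⟨H.src_mem f hf, H.tgt_mem f hf⟩
  have hH' : ∀ f ∈ H.edges \ {e}, G.src f ∈ H.verts ∧ G.tgt f ∈ H.verts :=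
    fun f hf => hH f hf.1
  let φ : Quot (fun u v : H.verts => G.Step (H.edges \ {e}) u v) →
      Quot (fun u v : H.verts => G.Step H.edges u v) :=
    Quot.map id fun _ _ => Step.mono Set.sdiff_subset
  have hφ : φ.Surjective := Quot.ind fun u => ⟨Quot.mk _ u, rfl⟩
  have hinj : φ.Injective ↔ G.Conn (H.edges \ {e}) (G.src e) (G.tgt e) := by
    refine ⟨fun h => ?_, fun hc a b => ?_⟩
    · refine (quot_mk_eq_iff_conn hH' ⟨_, H.src_mem e he⟩ ⟨_, H.tgt_mem e he⟩).1 (h ?_)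
      exact (quot_mk_eq_iff_conn hH _ _).2
        (conn_of_mem_ends he (src_mem_ends e) (tgt_mem_ends e))
    · induction a using Quot.ind
      induction b using Quot.ind
      exact fun hab => (quot_mk_eq_iff_conn hH' _ _).2
        (hc.diff_singleton ((quot_mk_eq_iff_conn hH _ _).1 hab))
  rw [H.numComponents_eq_card, (H.deleteEdge e).numComponents_eq_card]
  exact hφ.nat_card_lt_iff_not_injective.trans (not_congr hinj)

end CutEdge

section Blob

def Bridgeless (G : MDigraph) (F : Set G.E) : Prop :=
  ∀ f ∈ F, G.Conn (F \ {f}) (G.src f) (G.tgt f)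

lemma Subgraph.forall_not_isCutEdge_iff {H : Subgraph G} :
    (∀ f, ¬ H.IsCutEdge f) ↔ G.Bridgeless H.edges := by
  simp only [Subgraph.isCutEdge_iff, not_and, not_not, Bridgeless]

lemma Bridgeless.union {F₁ F₂ : Set G.E} (h₁ : G.Bridgeless F₁) (h₂ : G.Bridgeless F₂) :
    G.Bridgeless (F₁ ∪ F₂) := by
  rintro f (hf | hf)
  · exact (h₁ f hf).mono (Set.sdiff_subset_sdiff_left Set.subset_union_left)
  · exact (h₂ f hf).mono (Set.sdiff_subset_sdiff_left Set.subset_union_right)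

/-- `C` is `e` together with a minimal path joining its endpoints. -/
lemma exists_bridgeless_of_conn_diff {F : Set G.E} {e : G.E} (he : e ∈ F)
    (h : G.Conn (F \ {e}) (G.src e) (G.tgt e)) :
    ∃ C ⊆ F, e ∈ C ∧ G.Bridgeless C ∧
      ∀ f ∈ C, ∀ x ∈ G.ends f, G.Conn C (G.src e) x := by
  obtain ⟨P, hPF, hP, hPmin⟩ :=
    Finite.exists_le_minimal (p := fun P : Set G.E => G.Conn P (G.src e) (G.tgt e)) h
  have heP : e ∉ P := fun heP => (hPF heP).2 rfl
  have hcycle : ∀ f ∈ P, G.Conn (insert e P \ {f}) (G.src f) (G.tgt f) ∧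
      ∀ x ∈ G.ends f, G.Conn (insert e P) (G.src e) x := by
    intro f hf
    have hsub : P \ {f} ⊆ insert e P \ {f} :=
      Set.sdiff_subset_sdiff_left (Set.subset_insert e P)
    have hef : G.Conn (insert e P \ {f}) (G.src e) (G.tgt e) := conn_of_mem_ends
      ⟨Set.mem_insert e P, fun h => heP (h ▸ hf)⟩ (src_mem_ends e) (tgt_mem_ends e)
    have hnot : ¬ G.Conn (P \ {f}) (G.src e) (G.tgt e) := fun hc =>
      (hPmin hc Set.sdiff_subset hf).2 rfl
    obtain hc | ⟨c₁, hc₁, c₂, hc₂, h₁, h₂⟩ := hP.diff_singleton_or f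
    · exact absurd hc hnot
    have hc : G.Conn (insert e P \ {f}) c₁ c₂ :=
      ((h₁.mono hsub).symm.trans hef).trans (h₂.mono hsub).symm
    have hf' : G.Conn (insert e P \ {f}) (G.src f) (G.tgt f) :=
      hc.src_tgt_of_mem_ends hc₁ hc₂ fun h => hnot (h₁.trans (h ▸ h₂))
    exact ⟨hf', fun x hx =>
      ((h₁.mono hsub).trans (Conn.of_mem_ends hf' hc₁ hx)).mono Set.sdiff_subset⟩
  refine ⟨insert e P, Set.insert_subset he fun f hf => (hPF hf).1, Set.mem_insert e P, ?_, ?_⟩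
  · rintro f (rfl | hf)
    · exact hP.mono fun g hg => ⟨Or.inr hg, fun h => heP (h ▸ hg)⟩
    · exact (hcycle f hf).1
  · rintro f (rfl | hf)
    · exact fun x hx => conn_of_mem_ends (Set.mem_insert f P) (src_mem_ends f) hx
    · exact (hcycle f hf).2

lemma eq_of_xor {W : Set G.V} {f : G.E} (h : Xor (G.src f ∈ W) (G.tgt f ∈ W)) {x y : G.V}
    (hx : x ∈ G.ends f) (hxW : x ∉ W) (hy : y ∈ G.ends f) (hyW : y ∉ W) : x = y := by
  rcases hx with rfl | rfl <;> rcases hy with rfl | rfl <;> simp_all [Xor]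

lemma exists_mem_ends_of_xor {W : Set G.V} {f : G.E} (h : Xor (G.src f ∈ W) (G.tgt f ∈ W)) :
    ∃ y ∈ G.ends f, y ∈ W := by
  rcases h.or with h | h
  exacts [⟨_, src_mem_ends f, h⟩, ⟨_, tgt_mem_ends f, h⟩]

lemma Subgraph.notMem_edges_of_xor (B : Subgraph G) {f : G.E}
    (h : Xor (G.src f ∈ B.verts) (G.tgt f ∈ B.verts)) : f ∉ B.edges := fun hf => by
  rcases h with ⟨-, h⟩ | ⟨-, h⟩
  exacts [h (B.tgt_mem f hf), h (B.src_mem f hf)]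

variable {H B : Subgraph G}

/-- Otherwise `B` could be enlarged by a cycle through `e`. -/
lemma IsBlobIn.mem_edges_of_not_isCutEdge (hB : IsBlobIn H B) {e : G.E} (he : e ∈ H.edges)
    (hcut : ¬ H.IsCutEdge e) {v : G.V} (hv : v ∈ G.ends e) (hvB : v ∈ B.verts) :
    e ∈ B.edges := by
  rw [Subgraph.isCutEdge_iff, not_and, not_not] at hcut
  obtain ⟨C, hCH, heC, hC, hCconn⟩ := exists_bridgeless_of_conn_diff he (hcut he)
  let B' : Subgraph G :=
    { verts := B.verts ∪ {x | ∃ f ∈ C, x ∈ G.ends f}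
      edges := B.edges ∪ C
      src_mem := by
        rintro f (hf | hf)
        exacts [Or.inl (B.src_mem f hf), Or.inr ⟨f, hf, src_mem_ends f⟩]
      tgt_mem := by
        rintro f (hf | hf)
        exacts [Or.inl (B.tgt_mem f hf), Or.inr ⟨f, hf, tgt_mem_ends f⟩] }
  have hB'H : B'.le H := by
    refine ⟨Set.union_subset hB.1.1 ?_, Set.union_subset hB.1.2 hCH⟩
    rintro x ⟨f, hf, rfl | rfl⟩
    exacts [H.src_mem f (hCH hf), H.tgt_mem f (hCH hf)]
  have hB'conn : ∀ x ∈ B'.verts, G.Conn B'.edges (G.src e) x := by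
    rintro x (hx | ⟨f, hf, hx⟩)
    · exact (hCconn e heC v hv).mono Set.subset_union_right |>.trans
        ((hB.2.1.2 v hvB x hx).mono Set.subset_union_left)
    · exact (hCconn f hf x hx).mono Set.subset_union_right
  have hB'B := hB.2.2.2 B' hB'H
    ⟨⟨v, Or.inl hvB⟩, fun x hx y hy => (hB'conn x hx).symm.trans (hB'conn y hy)⟩
    (Subgraph.forall_not_isCutEdge_iff.2
      ((Subgraph.forall_not_isCutEdge_iff.1 hB.2.2.1).union hC))
    ⟨Set.subset_union_left, Set.subset_union_left⟩
  exact hB'B.2 (Or.inr heC)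

lemma IsBlobIn.incidentCut_of_xor (hB : IsBlobIn H B) {e : G.E} (he : e ∈ H.edges)
    (h : Xor (G.src e ∈ B.verts) (G.tgt e ∈ B.verts)) : IncidentCut H B e := by
  obtain ⟨v, hv, hvB⟩ := exists_mem_ends_of_xor h
  exact ⟨by_contra fun hcut =>
    B.notMem_edges_of_xor h (hB.mem_edges_of_not_isCutEdge he hcut hv hvB), h⟩

def nonIncidentEdges (H B : Subgraph G) : Set G.E := {e ∈ H.edges | ¬ IncidentCut H B e}

lemma IsBlobIn.mem_iff_of_conn (hB : IsBlobIn H B) {u v : G.V}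
    (h : G.Conn (nonIncidentEdges H B) u v) : u ∈ B.verts ↔ v ∈ B.verts := by
  induction h with
  | refl => rfl
  | tail _ hstep ih =>
    obtain ⟨g, ⟨hgH, hg⟩, hends⟩ := hstep
    have hiff : G.src g ∈ B.verts ↔ G.tgt g ∈ B.verts :=
      not_not.1 ((xor_iff_not_iff _ _).not.1 fun hx => hg (hB.incidentCut_of_xor hgH hx))
    rcases hends with ⟨rfl, rfl⟩ | ⟨rfl, rfl⟩
    exacts [ih.trans hiff, ih.trans hiff.symm]

/-- Otherwise the path, `f'` and the blob would join the endpoints of `f` avoiding `f`. -/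
lemma IsBlobIn.eq_of_conn (hB : IsBlobIn H B) {f f' : G.E} (hf : IncidentCut H B f)
    (hf' : IncidentCut H B f') {x x' : G.V} (hx : x ∈ G.ends f) (hxB : x ∉ B.verts)
    (hx' : x' ∈ G.ends f') (h : G.Conn (nonIncidentEdges H B) x x') :
    f = f' := by
  by_contra hne
  obtain ⟨y, hy, hyB⟩ := exists_mem_ends_of_xor hf.2
  obtain ⟨y', hy', hy'B⟩ := exists_mem_ends_of_xor hf'.2
  have hBf : B.edges ⊆ H.edges \ {f} := fun g hg =>
    ⟨hB.1.2 hg, fun hgf => B.notMem_edges_of_xor hf.2 (hgf ▸ hg)⟩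
  have hsub : nonIncidentEdges H B ⊆ H.edges \ {f} := fun g hg =>
    ⟨hg.1, fun hgf => hg.2 (Set.mem_singleton_iff.1 hgf ▸ hf)⟩
  have hf'f : f' ∈ H.edges \ {f} := ⟨hf'.1.1, fun h => hne (Set.mem_singleton_iff.1 h).symm⟩
  have hxy : G.Conn (H.edges \ {f}) x y :=
    ((h.mono hsub).trans (conn_of_mem_ends hf'f hx' hy')).trans
      ((hB.2.1.2 y' hy'B y hyB).mono hBf)
  exact (Subgraph.isCutEdge_iff.1 hf.1).2
    (hxy.src_tgt_of_mem_ends hx hy fun hxy => hxB (hxy ▸ hyB))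

lemma exists_isBlobIn_top_le {B₀ : Subgraph G} (hconn : B₀.IsConnected)
    (hcut : ∀ e, ¬ B₀.IsCutEdge e) : ∃ B, IsBlobIn (top G) B ∧ B₀.le B := by
  obtain ⟨B, ⟨hBconn, hBcut, hB₀B⟩, hmax⟩ := Set.Finite.exists_maximalFor'
    (fun B : Subgraph G => (B.verts, B.edges))
    {B | B.IsConnected ∧ (∀ e, ¬ B.IsCutEdge e) ∧ B₀.le B} (Set.toFinite _)
    ⟨B₀, hconn, hcut, subset_rfl, subset_rfl⟩
  refine ⟨B, ⟨⟨Set.subset_univ _, Set.subset_univ _⟩, hBconn, hBcut, ?_⟩, hB₀B⟩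
  exact fun B' _ hconn' hcut' hle =>
    hmax ⟨hconn', hcut', hB₀B.1.trans hle.1, hB₀B.2.trans hle.2⟩ hle

lemma sep_notMem_subset_nonIncidentEdges {K : Subgraph G} {A : Set G.E} {W : Set G.V}
    (hA : A ⊆ H.edges) (hK : K.verts ⊆ W) :
    {g ∈ A | G.src g ∉ W ∧ G.tgt g ∉ W} ⊆ nonIncidentEdges H K := by
  rintro g ⟨hgA, hsrc, htgt⟩
  refine ⟨hA hgA, fun hg => ?_⟩
  rcases Xor.or hg.2 with h | h
  exacts [hsrc (hK h), htgt (hK h)]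

lemma IsBlobIn.exists_incidentCut_of_conn (hB : IsBlobIn H B) {M K : Subgraph G}
    (hMH : M.edges ⊆ H.edges) (hKB : K.verts ⊆ B.verts) {u v : G.V}
    (h : G.Conn M.edges u v) (hu : u ∉ B.verts) (hv : v ∈ B.verts) :
    ∃ f ∈ M.edges, IncidentCut H B f ∧ ∃ w ∈ G.ends f, w ∉ B.verts ∧
      G.Conn (nonIncidentEdges H B) u w ∧ G.Conn (nonIncidentEdges M K) u w := by
  obtain ⟨f, hfM, hf, w, hw, hwB, huw⟩ := h.exists_crossing hu hv
  exact ⟨f, hfM, hB.incidentCut_of_xor (hMH hfM) hf, w, hw, hwB,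
    huw.mono (sep_notMem_subset_nonIncidentEdges hMH subset_rfl),
    huw.mono (sep_notMem_subset_nonIncidentEdges subset_rfl hKB)⟩

end Blob

section Pendant

variable {v : G.V} {m : G.E}

def IsPendantEdge (v : G.V) (m : G.E) : Prop :=
  (∀ g, v ∈ G.ends g ↔ g = m) ∧ G.src m ≠ G.tgt m

lemma exists_isPendantEdge_of_degree_eq_one (h : G.degree v = 1) : ∃ m, IsPendantEdge v m := by
  have card_zero (p : G.E → Prop) (h : Nat.card {e // p e} = 0) (e : G.E) : ¬ p e :=
    fun he => (Finite.card_eq_zero_iff.1 h).false ⟨e, he⟩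
  have card_one (p : G.E → Prop) (h : Nat.card {e // p e} = 1) : ∃ m, ∀ e, p e ↔ e = m := by
    obtain ⟨hsub, ⟨m, hm⟩⟩ := Nat.card_eq_one_iff_unique.1 h
    exact ⟨m, fun e => ⟨fun he => congrArg Subtype.val (hsub.elim ⟨e, he⟩ ⟨m, hm⟩),
      fun he => he ▸ hm⟩⟩
  rcases Nat.add_eq_one_iff.1 h with ⟨hin, hout⟩ | ⟨hin, hout⟩
  · obtain ⟨m, hm⟩ := card_one _ hout
    have hsrc : G.src m = v := (hm m).2 rfl
    refine ⟨m, fun g => ?_, fun h => card_zero _ hin m (h ▸ hsrc)⟩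
    rw [mem_ends, ← hm g, eq_comm, or_iff_left fun h => card_zero _ hin g h.symm]
  · obtain ⟨m, hm⟩ := card_one _ hin
    have htgt : G.tgt m = v := (hm m).2 rfl
    refine ⟨m, fun g => ?_, fun h => card_zero _ hout m (h ▸ htgt)⟩
    rw [mem_ends, ← hm g, eq_comm (b := G.tgt g),
      or_iff_right fun h => card_zero _ hout g h.symm]

variable {F : Set G.E}

lemma IsPendantEdge.eq_of_conn (hm : IsPendantEdge v m) (hmF : m ∉ F) {u : G.V}
    (h : G.Conn F u v) : u = v := by
  rcases Relation.ReflTransGen.cases_tail h with rfl | ⟨x, -, g, hgF, hg⟩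
  · rfl
  · have hv : v ∈ G.ends g := by rcases hg with ⟨-, rfl⟩ | ⟨rfl, -⟩ <;> simp
    exact absurd ((hm.1 g).1 hv ▸ hgF) hmF

lemma IsPendantEdge.conn_diff (hm : IsPendantEdge v m) {u w : G.V} (hu : u ≠ v) (hw : w ≠ v)
    (h : G.Conn F u w) : G.Conn (F \ {m}) u w := by
  have hmF : m ∉ F \ {m} := fun h => h.2 rfl
  rcases h.diff_singleton_or m with h | ⟨c₁, hc₁, c₂, hc₂, h₁, h₂⟩
  · exact h
  have hc₁v : c₁ ≠ v := fun hc => hu (hm.eq_of_conn hmF (hc ▸ h₁))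
  have hc₂v : c₂ ≠ v := fun hc => hw (hm.eq_of_conn hmF (hc ▸ h₂.symm))
  have hc : c₁ = c₂ := by
    rcases (hm.1 m).2 rfl with rfl | rfl <;> rcases hc₁ with rfl | rfl <;>
      rcases hc₂ with rfl | rfl <;> tauto
  exact h₁.trans (hc ▸ h₂)

lemma IsPendantEdge.verts_eq_singleton (hm : IsPendantEdge v m) {B : Subgraph G}
    (hconn : B.IsConnected) (hcut : ∀ e, ¬ B.IsCutEdge e) (hv : v ∈ B.verts) :
    B.verts = {v} := by
  have hmB : m ∉ B.edges := fun hmB => by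
    have h := Subgraph.forall_not_isCutEdge_iff.1 hcut m hmB
    have hmF : m ∉ B.edges \ {m} := fun h => h.2 rfl
    rcases (hm.1 m).2 rfl with rfl | rfl
    · exact hm.2 (hm.eq_of_conn hmF h.symm).symm
    · exact hm.2 (hm.eq_of_conn hmF h)
  exact Set.eq_singleton_iff_unique_mem.2
    ⟨hv, fun x hx => hm.eq_of_conn hmB (hconn.2 x hx v hv)⟩

lemma IsPendantEdge.notMem_of_le (hm : IsPendantEdge v m) {B₀ B : Subgraph G}
    (hB₀ : B₀.verts.Nonempty) (hle : B₀.le B) (hconn : B.IsConnected)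
    (hcut : ∀ e, ¬ B.IsCutEdge e) (hv₀ : v ∉ B₀.verts) : v ∉ B.verts := fun hv => by
  obtain ⟨x, hx⟩ := hB₀
  have hxv : x ∈ ({v} : Set G.V) := hm.verts_eq_singleton hconn hcut hv ▸ hle.1 hx
  exact hv₀ (Set.mem_singleton_iff.1 hxv ▸ hx)

/-- Deleting the pendant edge at the leaf would leave the leaves of two other labels
connected. -/
lemma IsPendantEdge.notMem_of_determinesIn {X : Type} {M B₀ : Subgraph G} {leaf : X → G.V}
    {S : Set X} (hM : M.IsConnected) (hB₀ : IsBlobIn M B₀)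
    (hSM : ∀ s ∈ S, leaf s ∈ M.verts) (hS : 3 ≤ S.ncard) (hdet : DeterminesIn M B₀ leaf S)
    {s : X} (hs : s ∈ S) (hm : IsPendantEdge (leaf s) m) : leaf s ∉ B₀.verts := by
  intro hsB
  have hB₀s := hm.verts_eq_singleton hB₀.2.1 hB₀.2.2.1 hsB
  obtain ⟨t, u, ht, hu, htu⟩ : ∃ t u, t ∈ S \ {s} ∧ u ∈ S \ {s} ∧ t ≠ u := by
    refine (Set.one_lt_ncard_iff (Set.finite_of_ncard_pos (by omega : 0 < S.ncard)).sdiff).1 ?_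
    rw [Set.ncard_sdiff_singleton_of_mem hs]
    omega
  have hleaf_ne : ∀ t ∈ S \ {s}, leaf t ≠ leaf s := fun t ht h =>
    hdet t ht.1 s hs ht.2 (h ▸ Conn.refl _)
  have hsub : M.edges \ {m} ⊆ nonIncidentEdges M B₀ := fun g hg => by
    refine ⟨hg.1, fun hgI => hg.2 ?_⟩
    obtain ⟨y, hy, hyB⟩ := exists_mem_ends_of_xor hgI.2
    rw [hB₀s, Set.mem_singleton_iff] at hyB
    exact (hm.1 g).1 (hyB ▸ hy)
  exact hdet t ht.1 u hu.1 htu ((hm.conn_diff (hleaf_ne t ht) (hleaf_ne u hu)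
    (hM.2 _ (hSM t ht.1) _ (hSM u hu.1))).mono hsub)

end Pendant

end MDigraph

theorem stmt_1_general {X : Type} (G : MDigraph) (leafMap : X → G.V)
    (hbij : ∀ v, G.degree v = 1 ↔ ∃ x, leafMap x = v)
    (M : Subgraph G) (hM : M.IsConnected)
    (Y : Set X) (hY : ∀ y ∈ Y, leafMap y ∈ M.verts)
    (S : Set X) (hSY : S ⊆ Y) (hS : 3 ≤ S.ncard)
    (B₀ : Subgraph G) (hB₀ : IsBlobIn M B₀)
    (hdet : DeterminesIn M B₀ leafMap S) :
    ∃ B : Subgraph G, IsBlobIn (top G) B ∧ B₀.le B ∧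
      DeterminesIn (top G) B leafMap S ∧
      ∀ s ∈ S, ∀ e, IncidentCut (top G) B e →
        (G.Conn {e' | ¬ IncidentCut (top G) B e'} (G.src e) (leafMap s) ∨
         G.Conn {e' | ¬ IncidentCut (top G) B e'} (G.tgt e) (leafMap s)) →
        e ∈ M.edges := by
  obtain ⟨B, hB, hB₀B⟩ := exists_isBlobIn_top_le hB₀.2.1 hB₀.2.2.1
  have hSM : ∀ s ∈ S, leafMap s ∈ M.verts := fun s hs => hY s (hSY hs)
  obtain ⟨v₀, hv₀⟩ := hB₀.2.1.1
  have hSB : ∀ s ∈ S, leafMap s ∉ B.verts := fun s hs => by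
    obtain ⟨m, hm⟩ := exists_isPendantEdge_of_degree_eq_one ((hbij _).2 ⟨s, rfl⟩)
    exact hm.notMem_of_le ⟨v₀, hv₀⟩ hB₀B hB.2.1 hB.2.2.1
      (hm.notMem_of_determinesIn hM hB₀ hSM hS hdet hs)
  have hattach := fun s (hs : s ∈ S) => hB.exists_incidentCut_of_conn (Set.subset_univ _)
    hB₀B.1 (hM.2 _ (hSM s hs) _ (hB₀.1.1 hv₀)) (hSB s hs) (hB₀B.1 hv₀)
  refine ⟨B, hB, hB₀B, fun s hs t ht hst hst' => ?_, fun s hs e he hes => ?_⟩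
  · obtain ⟨f, -, hf, w, hw, hwB, hsw, hsw₀⟩ := hattach s hs
    obtain ⟨f', -, hf', w', hw', hw'B, htw', htw'₀⟩ := hattach t ht
    have hff' : f = f' := hB.eq_of_conn hf hf' hw hwB hw' (hsw.symm.trans (hst'.trans htw'))
    have hww' : w = w' := eq_of_xor hf.2 hw hwB (hff' ▸ hw') hw'B
    exact hdet s hs t ht hst (hsw₀.trans (hww' ▸ htw'₀.symm))
  · obtain ⟨x, hx, hxs⟩ :
        ∃ x ∈ G.ends e, G.Conn (nonIncidentEdges (top G) B) x (leafMap s) := by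
      have hsub : {e' | ¬ IncidentCut (top G) B e'} ⊆ nonIncidentEdges (top G) B :=
        fun g hg => ⟨trivial, hg⟩
      rcases hes with h | h
      exacts [⟨_, src_mem_ends e, h.mono hsub⟩, ⟨_, tgt_mem_ends e, h.mono hsub⟩]
    have hxB : x ∉ B.verts := fun hxB => hSB s hs ((hB.mem_iff_of_conn hxs).1 hxB)
    obtain ⟨f, hfM, hf, w, hw, -, hsw, -⟩ := hattach s hs
    exact hB.eq_of_conn he hf hx hxB hw (hxs.trans hsw) ▸ hfM

/-- Lemma on subnetworks and blobs.
Let `N` (here `G`) be a finite connected network whose degree-1 nodes are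
bijectively labelled by `X`, and let `M` be a connected subnetwork of `N`, with
the restricted labelling of some of its degree-1 nodes by `Y ⊆ X`.  If a set
`S ⊆ Y` with `|S| ≥ 3` determines a blob `B₀` of `M`, then `S` determines a
blob `B` of `N`, namely the blob of `N` containing `B₀`; moreover, for each
`s ∈ S`, the cut edge of `N` incident to `B` through which the path from `B`
to `s` passes (i.e. whose endpoints remain connected to the leaf `s` after
deleting the cut edges of `N` incident to `B`) is an edge of `M`. -/
theorem stmt_1 {X : Type} (G : MDigraph) (leafMap : X → G.V)
    (hinj : Function.Injective leafMap)
    (hbij : ∀ v, G.degree v = 1 ↔ ∃ x, leafMap x = v)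
    (hG : ∀ u v, G.Conn Set.univ u v)
    (M : Subgraph G) (hM : M.IsConnected)
    (Y : Set X) (hY : ∀ y ∈ Y, leafMap y ∈ M.verts)
    (S : Set X) (hSY : S ⊆ Y) (hS : 3 ≤ S.ncard)
    (B₀ : Subgraph G) (hB₀ : IsBlobIn M B₀)
    (hdet : DeterminesIn M B₀ leafMap S) :
    ∃ B : Subgraph G, IsBlobIn (top G) B ∧ B₀.le B ∧
      DeterminesIn (top G) B leafMap S ∧
      ∀ s ∈ S, ∀ e, IncidentCut (top G) B e →
        (G.Conn {e' | ¬ IncidentCut (top G) B e'} (G.src e) (leafMap s) ∨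
         G.Conn {e' | ¬ IncidentCut (top G) B e'} (G.tgt e) (leafMap s)) →
        e ∈ M.edges :=
  stmt_1_general G leafMap hbij M hM Y hY S hSY hS B₀ hB₀ hdet
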